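/- Let p be a prime, R a commutative ring of characteristic p, m a positive integer, and λ a natural number. In S = R[x,y]/(x^p, y^{p^m}), define the sequence (x_1,y_1) = (x,y) and (x_{n+1}, y_{n+1}) = ((1+y)^λ · x_n + x, y + y_n + y·y_n). Then (x_{p^{m+1}}, y_{p^{m+1}}) = (0,0) in S × S. (In other words, the trivial deformation G_λ ×_k Spec(R) of G_λ is killed by its order p^{m+1}.) -/
import Mathlib


open MvPolynomial

/-- The coordinate ring `S = R[x,y]/(x^p, y^{p^m})`. -/
abbrev Gring (R : Type*) [CommRing R] (p m : ℕ) : Type _ :=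
  MvPolynomial (Fin 2) R ⧸
    Ideal.span {(X 0 : MvPolynomial (Fin 2) R) ^ p,
      (X 1 : MvPolynomial (Fin 2) R) ^ (p ^ m)}

/-- The image of `x` in `S`. -/
noncomputable def gx (R : Type*) [CommRing R] (p m : ℕ) : Gring R p m :=
  Ideal.Quotient.mk _ (X 0)

/-- The image of `y` in `S`. -/
noncomputable def gy (R : Type*) [CommRing R] (p m : ℕ) : Gring R p m :=
  Ideal.Quotient.mk _ (X 1)

open Finset

lemma hockey (N j : ℕ) : ∑ k ∈ Finset.range N, k.choose j = N.choose (j+1) := by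
  induction N with
  | zero => simp
  | succ n ih =>
    rw [Finset.sum_range_succ, ih, Nat.choose_succ_succ, add_comm]

lemma geom_sum_char (p : ℕ) (hp : p.Prime) (A : Type*) [CommRing A] [CharP A p]
    (n : ℕ) (v : A) :
    ∑ k ∈ Finset.range (p ^ n), (1 + v) ^ k = v ^ (p ^ n - 1) := by
  have hN : 0 < p ^ n := pow_pos hp.pos n
  have step1 : ∀ k ∈ Finset.range (p ^ n),
      (1 + v) ^ k = ∑ j ∈ Finset.range (p ^ n), (k.choose j : A) * v ^ j := by
    intro k hk
    rw [add_comm, add_pow]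
    rw [Finset.sum_subset (Finset.range_subset_range.2 (Finset.mem_range.1 hk))]
    · apply Finset.sum_congr rfl
      intro j _
      ring
    · intro j _ hj
      rw [Nat.choose_eq_zero_of_lt (by simpa using hj)]
      simp
  rw [Finset.sum_congr rfl step1, Finset.sum_comm]
  have step2 : ∀ j ∈ Finset.range (p ^ n),
      ∑ k ∈ Finset.range (p ^ n), (k.choose j : A) * v ^ j
        = ((p ^ n).choose (j + 1) : A) * v ^ j := by
    intro j _
    rw [← Finset.sum_mul, ← Nat.cast_sum, hockey]
  rw [Finset.sum_congr rfl step2]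
  rw [Finset.sum_eq_single (p ^ n - 1)]
  · rw [show p ^ n - 1 + 1 = p ^ n by omega, Nat.choose_self, Nat.cast_one, one_mul]
  · intro j hj hj'
    have hjlt : j + 1 < p ^ n := by
      have := Finset.mem_range.1 hj; omega
    have hdvd : p ∣ (p ^ n).choose (j + 1) :=
      hp.dvd_choose_pow (by omega) (by omega)
    rw [(CharP.cast_eq_zero_iff A p _).2 hdvd, zero_mul]
  · intro h
    exact absurd (Finset.mem_range.2 (by omega)) h

instance instCharPGring (p : ℕ) [Fact p.Prime] (R : Type*) [CommRing R] [CharP R p]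
    (m : ℕ) : CharP (Gring R p m) p := by
  have hp : p.Prime := Fact.out
  constructor
  intro n
  constructor
  · intro h
    have hmem : ((n : MvPolynomial (Fin 2) R)) ∈ Ideal.span
        {(X 0 : MvPolynomial (Fin 2) R) ^ p,
         (X 1 : MvPolynomial (Fin 2) R) ^ (p ^ m)} := by
      rwa [← Ideal.Quotient.eq_zero_iff_mem, map_natCast]
    rw [Ideal.mem_span_pair] at hmem
    obtain ⟨u, v, huv⟩ := hmem
    have hc := congrArg constantCoeff huv
    simp [zero_pow hp.pos.ne', zero_pow (pow_pos hp.pos m).ne'] at hc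
    exact (CharP.cast_eq_zero_iff R p n).1 hc.symm
  · intro h
    obtain ⟨k, rfl⟩ := h
    push_cast
    rw [show ((p : Gring R p m)) = 0 from ?_, zero_mul]
    rw [show ((p : Gring R p m)) = Ideal.Quotient.mk _ ((p : ℕ) : MvPolynomial (Fin 2) R)
        from (map_natCast _ p).symm]
    rw [CharP.cast_eq_zero, map_zero]

/-- Over a commutative ring `R` of characteristic `p`, the trivial
deformation `G_λ ×_k Spec(R)` is killed by its order `p^{m+1}`: the `p^{m+1}`-st
power of the generic point, computed by the recurrence
`(x_{n+1}, y_{n+1}) = ((1+y)^λ x_n + x, y + y_n + y·y_n)`, is the identity. -/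
theorem stmt14 (p : ℕ) (hp : p.Prime) (R : Type*) [CommRing R] [CharP R p]
    (m : ℕ) (hm : 1 ≤ m) (lam : ℕ)
    (s : ℕ → Gring R p m × Gring R p m)
    (h1 : s 1 = (gx R p m, gy R p m))
    (hrec : ∀ n, 1 ≤ n →
      s (n + 1) = ((1 + gy R p m) ^ lam * (s n).1 + gx R p m,
        gy R p m + (s n).2 + gy R p m * (s n).2)) :
    s (p ^ (m + 1)) = (0, 0) := by
  haveI : Fact p.Prime := ⟨hp⟩
  set Y := gy R p m with hYdef
  set Xx := gx R p m with hXdef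
  have hy : Y ^ (p ^ m) = 0 := by
    rw [hYdef, gy, ← map_pow, Ideal.Quotient.eq_zero_iff_mem]
    exact Ideal.subset_span (by simp)
  have key : ∀ n, 1 ≤ n → s n =
      (Xx * ∑ k ∈ Finset.range n, ((1 + Y) ^ lam) ^ k, (1 + Y) ^ n - 1) := by
    intro n hn
    induction n with
    | zero => omega
    | succ n ih =>
      rcases Nat.lt_or_ge n 1 with h | h
      · have hn0 : n = 0 := by omega
        subst hn0
        rw [h1]
        simp
      · rw [hrec n h, ih h]
        simp only [Prod.mk.injEq]
        constructor
        · rw [geom_sum_succ]; ring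
        · rw [pow_succ]; ring
  rw [key _ (Nat.one_le_pow _ _ hp.pos)]
  have hy2 : Y ^ (p ^ (m + 1)) = 0 := by
    rw [pow_succ, pow_mul, hy, zero_pow hp.pos.ne']
  have hYbig : Y ^ (p ^ (m + 1) - 1) = 0 := by
    have hlt : p ^ m < p ^ (m + 1) := Nat.pow_lt_pow_succ hp.one_lt
    obtain ⟨d, hd⟩ := Nat.exists_eq_add_of_le (show p ^ m ≤ p ^ (m + 1) - 1 by omega)
    rw [hd, pow_add, hy, zero_mul]
  have hsum : ∑ k ∈ Finset.range (p ^ (m + 1)), ((1 + Y) ^ lam) ^ k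
      = ((1 + Y) ^ lam - 1) ^ (p ^ (m + 1) - 1) := by
    have := geom_sum_char p hp _ (m + 1) ((1 + Y) ^ lam - 1)
    simpa using this
  obtain ⟨w, hw⟩ : Y ∣ (1 + Y) ^ lam - 1 := by
    have := sub_dvd_pow_sub_pow (1 + Y) 1 lam
    simpa using this
  refine Prod.ext ?_ ?_
  · show Xx * _ = 0
    rw [hsum, hw, mul_pow, hYbig, zero_mul, mul_zero]
  · show (1 + Y) ^ (p ^ (m + 1)) - 1 = 0
    rw [add_pow_char_pow, one_pow, hy2, add_zero, sub_self]
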